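/- arXiv:0810.5487 — 2 statements merged into one kernel-verified Lean document; each statement's English description precedes it below -/
import Mathlib

section
/- Let B_1, …, B_q be pairwise disjoint nonempty finite sets, let s ≥ 0 be an integer, and let W be a finite set of cardinality s + 1 disjoint from all B_t. Then for every integer j, N_{j+s}(B_1,…,B_q,W) ≥ N_j(B_1,…,B_q). -/
/-- The join of the boundaries of the simplices on the (pairwise disjoint nonempty) sets in
`Bs`: its faces are the subsets `F` of the union of the sets in `Bs` such that no `B ∈ Bs`
is contained in `F`. -/
def joinBoundaryFaces {α : Type*} [DecidableEq α] (Bs : List (Finset α)) :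
    Finset (Finset α) :=
  (Bs.foldr (· ∪ ·) ∅).powerset.filter (fun F => ∀ B ∈ Bs, ¬ B ⊆ F)

/-- `N_j(Bs)`: the number of faces of cardinality `j + 1` (dimension `j`) of the join of the
boundaries of the simplices on the sets in `Bs`; in particular `N_{-1} = 1` and `N_j = 0` for
`j < -1`. -/
def Ncount {α : Type*} [DecidableEq α] (Bs : List (Finset α)) (j : ℤ) : ℕ :=
  ((joinBoundaryFaces Bs).filter (fun F => (F.card : ℤ) = j + 1)).card

/-!
Fix `T ⊂ W` with `#T = s`. Every face `F` of the join on `B_1, …, B_q` is disjoint from `W`, so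
`F ∪ T` is a face of the join on `B_1, …, B_q, W`: it contains no `B_t` because `F` does not, and
it does not contain `W` because `T ≠ W`. The map `F ↦ F ∪ T` raises the cardinality by `s` and is
injective on sets disjoint from `T`.
-/

lemma List.mem_foldr_union {α : Type*} [DecidableEq α] {l : List (Finset α)} {x : α} :
    x ∈ l.foldr (· ∪ ·) ∅ ↔ ∃ b ∈ l, x ∈ b := by
  induction l with
  | nil => simp
  | cons a l ih => simp [ih]

section JoinBoundary

variable {α : Type*} [DecidableEq α] {Bs : List (Finset α)} {F T W : Finset α}

lemma mem_joinBoundaryFaces :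
    F ∈ joinBoundaryFaces Bs ↔ F ⊆ Bs.foldr (· ∪ ·) ∅ ∧ ∀ B ∈ Bs, ¬ B ⊆ F := by
  simp [joinBoundaryFaces]

lemma disjoint_of_mem_joinBoundaryFaces (hWB : ∀ B ∈ Bs, Disjoint W B)
    (hF : F ∈ joinBoundaryFaces Bs) : Disjoint F W := by
  rw [Finset.disjoint_left]
  intro x hxF hxW
  obtain ⟨B, hB, hxB⟩ := List.mem_foldr_union.mp ((mem_joinBoundaryFaces.mp hF).1 hxF)
  exact Finset.disjoint_left.mp (hWB B hB) hxW hxB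

lemma union_mem_joinBoundaryFaces_append (hWB : ∀ B ∈ Bs, Disjoint W B) (hTW : T ⊂ W)
    (hF : F ∈ joinBoundaryFaces Bs) : F ∪ T ∈ joinBoundaryFaces (Bs ++ [W]) := by
  have hFW := disjoint_of_mem_joinBoundaryFaces hWB hF
  obtain ⟨hFsub, hFface⟩ := mem_joinBoundaryFaces.mp hF
  refine mem_joinBoundaryFaces.mpr ⟨Finset.union_subset ?_ ?_, ?_⟩
  · intro x hx
    obtain ⟨B, hB, hxB⟩ := List.mem_foldr_union.mp (hFsub hx)
    exact List.mem_foldr_union.mpr ⟨B, List.mem_append_left _ hB, hxB⟩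
  · intro x hx
    exact List.mem_foldr_union.mpr ⟨W, by simp, hTW.subset hx⟩
  · intro B hB hBFT
    rcases List.mem_append.mp hB with hB | hB
    · have hBT : Disjoint B T := ((hWB B hB).mono_left hTW.subset).symm
      exact hFface B hB (Disjoint.left_le_of_le_sup_right hBFT hBT)
    · obtain rfl := List.mem_singleton.mp hB
      exact hTW.not_subset (Disjoint.left_le_of_le_sup_left hBFT hFW.symm)

theorem Ncount_le_Ncount_append (hWB : ∀ B ∈ Bs, Disjoint W B) (hTW : T ⊂ W) (j : ℤ) :
    Ncount Bs j ≤ Ncount (Bs ++ [W]) (j + T.card) := by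
  refine Finset.card_le_card_of_injOn (· ∪ T) ?_ ?_
  · intro F hF
    obtain ⟨hF, hFcard⟩ := Finset.mem_filter.mp hF
    have hFT : Disjoint F T := (disjoint_of_mem_joinBoundaryFaces hWB hF).mono_right hTW.subset
    refine Finset.mem_filter.mpr ⟨union_mem_joinBoundaryFaces_append hWB hTW hF, ?_⟩
    rw [Finset.card_union_of_disjoint hFT]
    push_cast
    omega
  · refine (Finset.disjoint_injOn_union_left T).mono fun F hF => ?_
    obtain ⟨hF, -⟩ := Finset.mem_filter.mp hF
    exact ((disjoint_of_mem_joinBoundaryFaces hWB hF).mono_right hTW.subset).symm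

end JoinBoundary

theorem joinBoundary_face_mono_general {α : Type*} [DecidableEq α]
    (q : ℕ) (B : Fin q → Finset α)
    (s : ℕ) (W : Finset α) (hWcard : W.card = s + 1) (hWB : ∀ t, Disjoint W (B t))
    (j : ℤ) :
    Ncount (List.ofFn B ++ [W]) (j + s) ≥ Ncount (List.ofFn B) j := by
  obtain ⟨T, hTsub, hTcard⟩ := Finset.exists_subset_card_eq (s := W) (n := s) (by omega)
  have hTW : T ⊂ W := Finset.ssubset_iff_subset_ne.mpr ⟨hTsub, by rintro rfl; omega⟩
  have hWB' : ∀ b ∈ List.ofFn B, Disjoint W b := by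
    simpa only [List.mem_ofFn, forall_exists_index, forall_apply_eq_imp_iff] using hWB
  simpa only [hTcard] using Ncount_le_Ncount_append hWB' hTW j

/-- if `B_1, …, B_q` are pairwise disjoint nonempty finite sets, `s ≥ 0`, and
`W` is a finite set of cardinality `s + 1` disjoint from all `B t`, then for every integer
`j`, `N_{j+s}(B_1,…,B_q,W) ≥ N_j(B_1,…,B_q)`. -/
theorem joinBoundary_face_mono {α : Type*} [DecidableEq α]
    (q : ℕ) (B : Fin q → Finset α) (hBne : ∀ t, (B t).Nonempty)
    (hBdisj : ∀ s t, s ≠ t → Disjoint (B s) (B t))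
    (s : ℕ) (W : Finset α) (hWcard : W.card = s + 1) (hWB : ∀ t, Disjoint W (B t))
    (j : ℤ) :
    Ncount (List.ofFn B ++ [W]) (j + s) ≥ Ncount (List.ofFn B) j :=
  joinBoundary_face_mono_general q B s W hWcard hWB j
end

section
/- Let d ≥ 0, d' ≥ 0 and i ≥ 1 be integers. Then there exist natural numbers c_0, …, c_{⌊(d+d'+2)/2⌋} such that P_{d,i}(t) · P_{d',i}(t) = ∑_{j=0}^{⌊(d+d'+2)/2⌋} c_j · t^j · P_{d+d'+1−2j, i}(t) in ℤ[t]. -/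
/-!
Write `[n] = 1 + t + ⋯ + t^(n-1)`. For `d = q i + r` with `0 ≤ r < i` we have
`P_{d,i} = [i+1]^q [r+2]`, so `P_{d,i} P_{d',i} = [i+1]^(q+q') [r+2] [r'+2]`. The Clebsch–Gordan
rule `[a][b] = ∑_{j < min a b} t^j [a+b-1-2j]` expands the last two factors into the terms
`t^j [s+1-2j]`, `s = r + r' + 2`. Those with `s - 2j ≤ i` are `t^j P_{d+d'+1-2j,i}` (times
the common power of `[i+1]`); those with `j ≤ s - i` recombine, by Clebsch–Gordan again, into
`[i+1][s-i+1]`, which together with the power of `[i+1]` is `P_{d+d'+1,i}`. So every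
coefficient is `0` or `1`.
-/

open Polynomial Finset

/-- The polynomial `P_{d,i}(t) ∈ ℤ[t]`: `P_{d,i} = 1` for `d < 0` (in particular `P_{-1,i} = 1`),
and for `d ≥ 0`, `P_{d,i} = (1 + t + ⋯ + t^i)^q (1 + t + ⋯ + t^r)` where `q ≥ 0` and
`1 ≤ r ≤ i` are the unique integers with `d + 1 = q·i + r` (for `i ≥ 1`, `q = ⌊d/i⌋` and
`r = (d mod i) + 1`). -/
noncomputable def Ppoly (d : ℤ) (i : ℕ) : ℤ[X] :=
  if d < 0 then 1
  else (∑ k ∈ range (i + 1), X ^ k) ^ (d.toNat / i) *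
    (∑ k ∈ range (d.toNat % i + 2), X ^ k)

section GeomSum

variable {R : Type*} [CommSemiring R] (x : R)

theorem geom_sum_succ_eq_one_add (n : ℕ) :
    ∑ k ∈ range (n + 1), x ^ k = 1 + x * ∑ k ∈ range n, x ^ k := by
  rw [sum_range_succ', mul_sum, add_comm]
  simp only [pow_succ', pow_zero]

theorem geom_sum_succ_mul_geom_sum_succ (a b : ℕ) :
    (∑ k ∈ range (a + 1), x ^ k) * ∑ k ∈ range (b + 1), x ^ k =
      ∑ k ∈ range (a + b + 1), x ^ k +
        x * ((∑ k ∈ range a, x ^ k) * ∑ k ∈ range b, x ^ k) := by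
  have two_ways : 1 + x * ∑ k ∈ range a, x ^ k = ∑ k ∈ range a, x ^ k + x ^ a := by
    rw [← geom_sum_succ_eq_one_add, sum_range_succ]
  simp only [geom_sum_succ_eq_one_add, sum_range_add (fun k => x ^ k) a b, pow_add, ← mul_sum]
  set A := ∑ k ∈ range a, x ^ k
  set B := ∑ k ∈ range b, x ^ k
  calc (1 + x * A) * (1 + x * B) = 1 + x * A + x * B * (1 + x * A) := by ring
    _ = 1 + x * A + x * B * (A + x ^ a) := by rw [two_ways]
    _ = 1 + x * (A + x ^ a * B) + x * (A * B) := by ring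

theorem geom_sum_mul_geom_sum (a b : ℕ) :
    (∑ k ∈ range a, x ^ k) * ∑ k ∈ range b, x ^ k =
      ∑ j ∈ range (min a b), x ^ j * ∑ k ∈ range (a + b - 1 - 2 * j), x ^ k := by
  induction a generalizing b with
  | zero => simp
  | succ a ih =>
    cases b with
    | zero => simp
    | succ b =>
      rw [geom_sum_succ_mul_geom_sum_succ, ih, mul_sum, Nat.add_min_add_right,
        sum_range_succ' _ (min a b), add_comm]
      congr 1
      · refine sum_congr rfl fun j _ => ?_
        rw [show a + 1 + (b + 1) - 1 - 2 * (j + 1) = a + b - 1 - 2 * j by omega, pow_succ']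
        ring
      · rw [pow_zero, one_mul, show a + 1 + (b + 1) - 1 - 2 * 0 = a + b + 1 by omega]

end GeomSum

theorem Ppoly_natCast_mul_add {Q r i : ℕ} (hr : r < i) :
    Ppoly ((Q * i + r : ℕ) : ℤ) i =
      (∑ k ∈ range (i + 1), X ^ k) ^ Q * ∑ k ∈ range (r + 2), X ^ k := by
  rw [Ppoly, if_neg (by omega), Int.toNat_natCast, Nat.add_comm (Q * i),
    Nat.add_mul_div_right _ _ (by omega), Nat.div_eq_of_lt hr, zero_add,
    Nat.add_mul_mod_self_right, Nat.mod_eq_of_lt hr]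

theorem Ppoly_mul_add_sub_one {Q s i : ℕ} (hs : s ≤ i) :
    Ppoly ((Q : ℤ) * i + s - 1) i =
      (∑ k ∈ range (i + 1), X ^ k) ^ Q * ∑ k ∈ range (s + 1), X ^ k := by
  rcases s with _ | s
  · rcases Q with _ | Q
    · simp [Ppoly]
    rcases i with _ | i
    · simp [Ppoly]
    have h : ((Q + 1 : ℕ) : ℤ) * (i + 1 : ℕ) + (0 : ℕ) - 1 =
        ((Q * (i + 1) + i : ℕ) : ℤ) := by
      push_cast; ring
    rw [h, Ppoly_natCast_mul_add (Nat.lt_succ_self i), zero_add, sum_range_one, pow_zero, mul_one,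
      pow_succ]
  · have h : (Q : ℤ) * i + (s + 1 : ℕ) - 1 = ((Q * i + s : ℕ) : ℤ) := by
      push_cast; ring
    rw [h, Ppoly_natCast_mul_add (by omega)]

theorem Ppoly_mul_add_sub_one_eq_sum {Q s i : ℕ} (hs : s ≤ 2 * i) :
    Ppoly ((Q : ℤ) * i + s - 1) i = (∑ k ∈ range (i + 1), X ^ k) ^ Q *
      ∑ j ∈ range (s - i + 1), X ^ j * ∑ k ∈ range (s + 1 - 2 * j), X ^ k := by
  by_cases hsi : s ≤ i
  · rw [Ppoly_mul_add_sub_one hsi, Nat.sub_eq_zero_of_le hsi, zero_add, sum_range_one, pow_zero,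
      one_mul, Nat.mul_zero, Nat.sub_zero]
  obtain ⟨e, rfl⟩ : ∃ e, s = i + e := ⟨s - i, by omega⟩
  have h : (Q : ℤ) * i + (i + e : ℕ) - 1 = ((Q + 1 : ℕ) : ℤ) * i + e - 1 := by
    push_cast; ring
  rw [h, Ppoly_mul_add_sub_one (by omega : e ≤ i), pow_succ, mul_assoc, geom_sum_mul_geom_sum,
    Nat.add_sub_cancel_left, min_eq_right (by omega)]
  refine congrArg _ (sum_congr rfl fun j _ => ?_)
  rw [show i + 1 + (e + 1) - 1 - 2 * j = i + e + 1 - 2 * j by omega]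

theorem geom_sum_pow_mul_geom_sum_mul_geom_sum {Q r r' i : ℕ} (hr : r < i) (hr' : r' < i) :
    (∑ k ∈ range (i + 1), X ^ k) ^ Q *
        ((∑ k ∈ range (r + 2), X ^ k) * ∑ k ∈ range (r' + 2), X ^ k) =
      Ppoly ((Q : ℤ) * i + (r + r' + 2 : ℕ) - 1) i +
        ∑ j ∈ Ioc (r + r' + 2 - i) (min r r' + 1),
          X ^ j * Ppoly ((Q : ℤ) * i + (r + r' + 2 : ℕ) - 1 - 2 * j) i := by
  set s := r + r' + 2
  have clebsch_gordan :
      (∑ k ∈ range (r + 2), (X : ℤ[X]) ^ k) * ∑ k ∈ range (r' + 2), X ^ k =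
      ∑ j ∈ range (min r r' + 2), X ^ j * ∑ k ∈ range (s + 1 - 2 * j), X ^ k := by
    rw [geom_sum_mul_geom_sum, Nat.add_min_add_right]
    exact sum_congr rfl fun j _ => by
      rw [show r + 2 + (r' + 2) - 1 - 2 * j = s + 1 - 2 * j by omega]
  rw [clebsch_gordan, ← sum_range_add_sum_Ico _ (show s - i + 1 ≤ min r r' + 2 by omega),
    mul_add, ← Ico_add_one_add_one_eq_Ioc, mul_sum (Ico _ _),
    Ppoly_mul_add_sub_one_eq_sum (by omega)]
  refine congrArg (HAdd.hAdd _) (sum_congr rfl fun j hj => ?_)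
  rw [mem_Ico] at hj
  have hj2 : 2 * j ≤ s := by omega
  rw [show (Q : ℤ) * i + s - 1 - 2 * j = Q * i + (s - 2 * j : ℕ) - 1 by
      push_cast [Nat.cast_sub hj2]; ring,
    Ppoly_mul_add_sub_one (by omega), show s - 2 * j + 1 = s + 1 - 2 * j by omega]
  ring

theorem Ppoly_natCast_mul_Ppoly_natCast {d d' i : ℕ} (hi : 0 < i) :
    Ppoly d i * Ppoly d' i = Ppoly ((d : ℤ) + d' + 1) i +
      ∑ j ∈ Ioc (d % i + d' % i + 2 - i) (min (d % i) (d' % i) + 1),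
        X ^ j * Ppoly ((d : ℤ) + d' + 1 - 2 * j) i := by
  obtain ⟨q, r, hr, rfl⟩ : ∃ q r, r < i ∧ d = q * i + r :=
    ⟨d / i, d % i, Nat.mod_lt d hi, (Nat.div_add_mod' d i).symm⟩
  obtain ⟨q', r', hr', rfl⟩ : ∃ q r, r < i ∧ d' = q * i + r :=
    ⟨d' / i, d' % i, Nat.mod_lt d' hi, (Nat.div_add_mod' d' i).symm⟩
  have mod_eq {q r : ℕ} (hr : r < i) : (q * i + r) % i = r := by
    rw [Nat.add_comm, Nat.add_mul_mod_self_right, Nat.mod_eq_of_lt hr]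
  have arg_eq : ((q * i + r : ℕ) : ℤ) + (q' * i + r' : ℕ) + 1 =
      ((q + q' : ℕ) : ℤ) * i + (r + r' + 2 : ℕ) - 1 := by
    push_cast
    ring
  rw [mod_eq hr, mod_eq hr', Ppoly_natCast_mul_add hr, Ppoly_natCast_mul_add hr', mul_mul_mul_comm,
    ← pow_add, geom_sum_pow_mul_geom_sum_mul_geom_sum hr hr', arg_eq]

/-- for `d, d' ≥ 0` and `i ≥ 1`, there are natural numbers `c_j` such that
`P_{d,i}(t) · P_{d',i}(t) = ∑_{j=0}^{⌊(d+d'+2)/2⌋} c_j · t^j · P_{d+d'+1-2j, i}(t)` in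
`ℤ[t]`, i.e. the product is a nonnegative integer combination of the basis `B_{d+d'+1,i}`. -/
theorem Ppoly_product_nonneg_comb (d d' i : ℕ) (hi : 1 ≤ i) :
    ∃ c : ℕ → ℕ, Ppoly d i * Ppoly d' i =
      ∑ j ∈ range ((d + d' + 2) / 2 + 1),
        (c j : ℤ[X]) * X ^ j * Ppoly ((d : ℤ) + d' + 1 - 2 * j) i := by
  rw [Ppoly_natCast_mul_Ppoly_natCast hi]
  set E := d % i + d' % i + 2 - i
  set M := min (d % i) (d' % i) + 1
  refine ⟨fun j => if j = 0 ∨ j ∈ Ioc E M then 1 else 0, ?_⟩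
  have support : (range ((d + d' + 2) / 2 + 1)).filter (fun j => j = 0 ∨ j ∈ Ioc E M) =
      insert 0 (Ioc E M) := by
    ext j
    simp only [mem_filter, mem_range, mem_insert, mem_Ioc]
    have := Nat.mod_le d i
    have := Nat.mod_le d' i
    omega
  simp only [Nat.cast_ite, Nat.cast_one, Nat.cast_zero, ite_mul, one_mul, zero_mul]
  rw [← sum_filter, support, sum_insert (by simp)]
  simp only [pow_zero, one_mul, Nat.cast_zero, mul_zero, sub_zero]
end
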